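/- For oriented percolation as described, for every function f : ℤ^d → [0,∞] and all integers 0 ≤ m < n: E[ Σ_{x∈T_n} Σ_{y∈T_m} 1( (m,y) → (n,x) ) · f(x − y) ] ≤ E[ |T_m| ] · Σ_{z∈ℤ^d} f(z) · P( z ∈ T_{n−m} ). -/

import Mathlib

open MeasureTheory
open scoped ENNReal Classical

noncomputable section

/-- Points of the integer lattice `ℤ^d`. -/
abbrev ZLat (d : ℕ) := Fin d → ℤ

namespace OrientedPercolationPaper

/-- A directed bond `((n,x),(n+1,y))` of oriented percolation, encoded as `(n, x, y)`. -/
abbrev Bond (d : ℕ) := ℕ × ZLat d × ZLat d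

/-- `(m,y) → (n,x)`: there is an occupied path from `(m,y)` to `(n,x)` (with the
convention `(m,y) → (m,x)` iff `x = y`). -/
def Conn {d : ℕ} {Ω : Type*} (occ : Bond d → Ω → Prop) (ω : Ω)
    (m : ℕ) (y : ZLat d) (n : ℕ) (x : ZLat d) : Prop :=
  m ≤ n ∧ ∃ g : ℕ → ZLat d, g m = y ∧ g n = x ∧
    ∀ i : ℕ, m ≤ i → i < n → occ (i, g i, g (i + 1)) ω

section Aux

variable {d : ℕ} {Ω Ω' : Type*}

lemma conn_congr {q : Bond d → Ω → Prop} {q' : Bond d → Ω' → Prop} {ω : Ω} {ω' : Ω'}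
    (h : ∀ b, q b ω ↔ q' b ω') (m : ℕ) (y : ZLat d) (n : ℕ) (x : ZLat d) :
    Conn q ω m y n x ↔ Conn q' ω' m y n x := by
  unfold Conn
  refine and_congr_right fun _ => exists_congr fun g => and_congr_right fun _ =>
    and_congr_right fun _ => forall_congr' fun i => forall_congr' fun _ =>
      forall_congr' fun _ => h _

lemma conn_trans {q : Bond d → Ω → Prop} {ω : Ω} {a b c : ℕ} {u v w : ZLat d}
    (h1 : Conn q ω a u b v) (h2 : Conn q ω b v c w) : Conn q ω a u c w := by
  obtain ⟨hab, g1, hg1a, hg1b, hg1⟩ := h1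
  obtain ⟨hbc, g2, hg2b, hg2c, hg2⟩ := h2
  refine ⟨hab.trans hbc, fun i => if i ≤ b then g1 i else g2 i, ?_, ?_, ?_⟩
  · simp [hab, hg1a]
  · by_cases hcb : c ≤ b
    · have hbceq : b = c := le_antisymm hbc hcb
      subst hbceq
      have : v = w := hg2b ▸ hg2c.symm ▸ rfl
      simp [hcb, hg1b, ← this, hg2b, hg2c]
    · simp [hcb, hg2c]
  · intro i hai hic
    by_cases hib : i < b
    · have h1le : i + 1 ≤ b := hib
      simp only [if_pos hib.le, if_pos h1le]
      exact hg1 i hai hib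
    · push_neg at hib
      have hnot : ¬ (i + 1 ≤ b) := by omega
      have h2' := hg2 i hib hic
      show q (i, (if i ≤ b then g1 i else g2 i),
        (if i + 1 ≤ b then g1 (i + 1) else g2 (i + 1))) ω
      rw [if_neg hnot]
      by_cases h' : i ≤ b
      · have hieq : i = b := le_antisymm h' hib
        subst hieq
        rw [if_pos h', hg1b, ← hg2b]
        exact h2'
      · rw [if_neg h']
        exact h2'

lemma conn_shift {q : Bond d → Ω → Prop} {ω : Ω} (m : ℕ) (y : ZLat d) (k : ℕ) (z : ZLat d) :
    Conn (fun b => q (b.1 + m, b.2.1 + y, b.2.2 + y)) ω 0 0 k z ↔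
      Conn q ω m y (k + m) (z + y) := by
  constructor
  · rintro ⟨-, g, hg0, hgk, hg⟩
    refine ⟨Nat.le_add_left m k, fun j => g (j - m) + y, ?_, ?_, ?_⟩
    · simp [hg0]
    · simp [hgk]
    · intro i him hik
      have h1 : i - m < k := by omega
      have h2 : i - m + m = i := by omega
      have h3 : i + 1 - m = i - m + 1 := by omega
      have := hg (i - m) (Nat.zero_le _) h1
      simp only [h2] at this
      show q (i, g (i - m) + y, g (i + 1 - m) + y) ω
      rw [h3]
      exact this
  · rintro ⟨-, g, hgm, hgn, hg⟩
    refine ⟨Nat.zero_le k, fun j => g (j + m) - y, ?_, ?_, ?_⟩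
    · simp [hgm]
    · simp [hgn]
    · intro i _ hik
      have := hg (i + m) (Nat.le_add_left m i) (by omega)
      have harr : i + 1 + m = i + m + 1 := by omega
      simp only [harr, sub_add_cancel]
      exact this

lemma conn_measurable (M : MeasurableSpace Ω) (q : Bond d → Ω → Prop)
    (m : ℕ) (y : ZLat d) (n : ℕ) (x : ZLat d)
    (hq : ∀ b : Bond d, m ≤ b.1 → b.1 < n → MeasurableSet[M] {ω | q b ω}) :
    MeasurableSet[M] {ω | Conn q ω m y n x} := by
  by_cases hmn : m ≤ n
  · classical
    set E : (Fin (n + 1) → ZLat d) → ℕ → ZLat d :=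
      fun h i => if hi : i < n + 1 then h ⟨i, hi⟩ else 0 with hE
    have hset : {ω | Conn q ω m y n x} =
        ⋃ (h : Fin (n + 1) → ZLat d) (_ : E h m = y ∧ E h n = x),
          ⋂ i ∈ Finset.Ico m n, {ω | q (i, E h i, E h (i + 1)) ω} := by
      ext ω
      simp only [Set.mem_setOf_eq, Set.mem_iUnion, Set.mem_iInter, Finset.mem_Ico]
      constructor
      · rintro ⟨-, g, hgm, hgn, hg⟩
        have hm1 : m < n + 1 := by omega
        refine ⟨fun j => g j, ⟨?_, ?_⟩, ?_⟩
        · simp [hE, hm1, hgm, Nat.not_lt.mpr hmn]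
        · simp [hE, hgn]
        · intro i hi
          have h1 : i < n + 1 := by omega
          have h2 : i + 1 < n + 1 := by omega
          simpa [hE, h1, h2, hi.2, hi.2.le] using hg i hi.1 hi.2
      · rintro ⟨h, ⟨hm', hn'⟩, hh⟩
        exact ⟨hmn, E h, hm', hn', fun i h1 h2 => hh i ⟨h1, h2⟩⟩
    rw [hset]
    refine MeasurableSet.iUnion fun h => MeasurableSet.iUnion fun _ => ?_
    exact Finset.measurableSet_biInter _ fun i hi =>
      hq _ (Finset.mem_Ico.mp hi).1 (Finset.mem_Ico.mp hi).2
  · have : {ω | Conn q ω m y n x} = ∅ := by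
      ext ω
      simp only [Set.mem_setOf_eq, Set.mem_empty_iff_false, iff_false]
      exact fun h => hmn h.1
    rw [this]
    exact MeasurableSet.empty

lemma iIndepSet_precomp {ι κ : Type*} [MeasurableSpace Ω] {μ : Measure Ω} {s : ι → Set Ω}
    (h : ProbabilityTheory.iIndepSet s μ) (φ : κ → ι) (hφ : Function.Injective φ) :
    ProbabilityTheory.iIndepSet (fun b => s (φ b)) μ := by
  classical
  rw [ProbabilityTheory.iIndepSet_iff] at h ⊢
  intro F f hf
  have hmeas : ∀ i ∈ F.image φ,
      MeasurableSet[MeasurableSpace.generateFrom {s i}]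
        (⋂ b ∈ F.filter (fun b => φ b = i), f b) := by
    intro i _
    refine Finset.measurableSet_biInter _ fun b hb => ?_
    have hbi : φ b = i := (Finset.mem_filter.mp hb).2
    rw [← hbi]
    exact hf b (Finset.mem_filter.mp hb).1
  have key := h (F.image φ) (f := fun i => ⋂ b ∈ F.filter (fun b => φ b = i), f b) hmeas
  have h1 : (⋂ i ∈ F.image φ, ⋂ b ∈ F.filter (fun b => φ b = i), f b) = ⋂ b ∈ F, f b := by
    ext ω
    simp only [Set.mem_iInter, Finset.mem_image, Finset.mem_filter]
    constructor
    · intro H b hb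
      exact H (φ b) ⟨b, hb, rfl⟩ b ⟨hb, rfl⟩
    · rintro H i ⟨b, hb, rfl⟩ b' ⟨hb', -⟩
      exact H b' hb'
  have h2 : ∀ b ∈ F, F.filter (fun b' => φ b' = φ b) = {b} := by
    intro b hb
    ext b'
    simp only [Finset.mem_filter, Finset.mem_singleton]
    constructor
    · rintro ⟨-, h'⟩
      exact hφ h'
    · rintro rfl
      exact ⟨hb, rfl⟩
  rw [h1] at key
  rw [key, Finset.prod_image (fun b _ b' _ hbb => hφ hbb)]
  refine Finset.prod_congr rfl fun b hb => ?_
  show μ (⋂ b' ∈ F.filter (fun b' => φ b' = φ b), f b') = μ (f b)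
  rw [h2 b hb, Finset.set_biInter_singleton]

variable [MeasurableSpace Ω] {P : Measure Ω} [IsProbabilityMeasure P]

/-- The Boolean configuration map. -/
def cfg (q : Bond d → Ω → Prop) (ω : Ω) : Bond d → Bool := fun b => if q b ω then true else false

lemma cfg_measurable (q : Bond d → Ω → Prop) (hq : ∀ b, MeasurableSet {ω | q b ω}) :
    Measurable (cfg q) :=
  measurable_pi_lambda _ fun b => Measurable.ite (hq b) measurable_const measurable_const

lemma cfg_apply_true {q : Bond d → Ω → Prop} {ω : Ω} {b : Bond d} :
    cfg q ω b = true ↔ q b ω := by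
  by_cases h : q b ω <;> simp [cfg, h]

lemma map_cfg_cylinder {q : Bond d → Ω → Prop}
    (hq : ∀ b, MeasurableSet {ω | q b ω})
    (hi : ProbabilityTheory.iIndepSet (fun b => {ω | q b ω}) P)
    (r : Bond d → ℝ≥0∞) (hr : ∀ b, P {ω | q b ω} = r b)
    (s : Finset (Bond d)) (S : Set (∀ i : s, Bool)) :
    P (cfg q ⁻¹' cylinder s S) =
      ∑ c : (∀ i : s, Bool),
        (if c ∈ S then ∏ b : s, (if c b then r b.1 else 1 - r b.1) else 0) := by
  classical
  set fc : (∀ i : s, Bool) → Bond d → Set Ω := fun c b =>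
    if (∀ hb : b ∈ s, c ⟨b, hb⟩ = true) then {ω | q b ω} else {ω | q b ω}ᶜ with hfc
  have hfc_mem : ∀ (c : ∀ i : s, Bool) (b : Bond d) (hb : b ∈ s) (ω : Ω),
      ω ∈ fc c b ↔ cfg q ω b = c ⟨b, hb⟩ := by
    intro c b hb ω
    simp only [hfc]
    by_cases hcb : c ⟨b, hb⟩ = true
    · rw [if_pos (fun _ => hcb), hcb]
      exact ⟨fun h => cfg_apply_true.mpr h, fun h => cfg_apply_true.mp h⟩
    · rw [if_neg (fun h => hcb (h hb))]
      have hfalse : c ⟨b, hb⟩ = false := by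
        cases hc2 : c ⟨b, hb⟩
        · rfl
        · exact absurd hc2 hcb
      rw [hfalse]
      constructor
      · intro h
        have hnq : ¬ q b ω := h
        simp [cfg, hnq]
      · intro h hq'
        have hT : cfg q ω b = true := cfg_apply_true.mpr hq'
        rw [h] at hT
        exact absurd hT (by simp)
  have hA : ∀ c : (∀ i : s, Bool),
      {ω | ∀ b : s, cfg q ω b = c b} = ⋂ b ∈ s, fc c b := by
    intro c
    ext ω
    simp only [Set.mem_setOf_eq, Set.mem_iInter]
    constructor
    · intro H b hb
      exact (hfc_mem c b hb ω).mpr (H ⟨b, hb⟩)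
    · intro H b
      exact (hfc_mem c b.1 b.2 ω).mp (H b.1 b.2)
  have hAmeas : ∀ c : (∀ i : s, Bool), ∀ b ∈ s,
      MeasurableSet[MeasurableSpace.generateFrom {{ω | q b ω}}] (fc c b) := by
    intro c b hb
    have h0 : MeasurableSet[MeasurableSpace.generateFrom {{ω | q b ω}}] {ω | q b ω} :=
      MeasurableSpace.measurableSet_generateFrom rfl
    simp only [hfc]
    split
    · exact h0
    · exact h0.compl
  have hprod : ∀ c : (∀ i : s, Bool),
      P (⋂ b ∈ s, fc c b) = ∏ b : s, (if c b then r b.1 else 1 - r b.1) := by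
    intro c
    rw [(ProbabilityTheory.iIndepSet_iff _ _).1 hi s (hAmeas c)]
    rw [Finset.univ_eq_attach, ← Finset.prod_attach s (fun b => P (fc c b))]
    refine Finset.prod_congr rfl fun b _ => ?_
    simp only [hfc]
    by_cases hcb : c b = true
    · rw [if_pos (fun _ => hcb), if_pos hcb, hr]
    · rw [if_neg (fun h => hcb (h b.2)), if_neg hcb,
        measure_compl (hq b.1) (measure_ne_top P _), measure_univ, hr]
  have hdecomp : cfg q ⁻¹' cylinder s S =
      ⋃ c : (∀ i : s, Bool),
        (if c ∈ S then {ω | ∀ b : s, cfg q ω b = c b} else ∅) := by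
    ext ω
    simp only [Set.mem_preimage, mem_cylinder, Set.mem_iUnion]
    constructor
    · intro H
      exact ⟨s.restrict (cfg q ω), by rw [if_pos H]; exact fun b => rfl⟩
    · rintro ⟨c, hc⟩
      by_cases hcS : c ∈ S
      · have hc' : ω ∈ {ω | ∀ b : s, cfg q ω b = c b} := by rwa [if_pos hcS] at hc
        have hre : s.restrict (cfg q ω) = c := funext fun b => hc' b
        rw [hre]
        exact hcS
      · rw [if_neg hcS] at hc
        exact absurd hc (Set.notMem_empty ω)
  rw [hdecomp, measure_iUnion ?hdisj ?hmeas]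
  · rw [tsum_fintype]
    refine Finset.sum_congr rfl fun c _ => ?_
    by_cases hcS : c ∈ S
    · rw [if_pos hcS, if_pos hcS, hA c, hprod c]
    · rw [if_neg hcS, if_neg hcS, measure_empty]
  case hdisj =>
    intro c c' hcc
    simp only [Function.onFun]
    by_cases hc : c ∈ S
    · by_cases hc' : c' ∈ S
      · rw [if_pos hc, if_pos hc', Set.disjoint_left]
        intro ω h1 h2
        exact hcc (funext fun b => (h1 b).symm.trans (h2 b))
      · rw [if_neg hc']
        exact Set.disjoint_empty _
    · rw [if_neg hc]
      exact Set.empty_disjoint _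
  case hmeas =>
    intro c
    split
    · rw [hA c]
      refine Finset.measurableSet_biInter _ fun b hb => ?_
      simp only [hfc]
      split
      · exact hq b
      · exact (hq b).compl
    · exact MeasurableSet.empty

lemma map_cfg_eq {q q' : Bond d → Ω → Prop}
    (hq : ∀ b, MeasurableSet {ω | q b ω}) (hq' : ∀ b, MeasurableSet {ω | q' b ω})
    (hi : ProbabilityTheory.iIndepSet (fun b => {ω | q b ω}) P)
    (hi' : ProbabilityTheory.iIndepSet (fun b => {ω | q' b ω}) P)
    (r : Bond d → ℝ≥0∞) (hr : ∀ b, P {ω | q b ω} = r b) (hr' : ∀ b, P {ω | q' b ω} = r b) :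
    P.map (cfg q) = P.map (cfg q') := by
  have hX : Measurable (cfg q) := cfg_measurable q hq
  have hX' : Measurable (cfg q') := cfg_measurable q' hq'
  haveI : IsProbabilityMeasure (P.map (cfg q)) := Measure.isProbabilityMeasure_map hX.aemeasurable
  haveI : IsProbabilityMeasure (P.map (cfg q')) := Measure.isProbabilityMeasure_map hX'.aemeasurable
  refine ext_of_generate_finite _ generateFrom_measurableCylinders.symm
    isPiSystem_measurableCylinders ?_ (by simp)
  intro t ht
  obtain ⟨s, S, hS, rfl⟩ := (mem_measurableCylinders t).mp ht
  have hcyl : MeasurableSet (cylinder s S) :=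
    MeasurableSet.cylinder (α := fun _ : Bond d => Bool) s hS
  rw [Measure.map_apply hX hcyl, Measure.map_apply hX' hcyl,
    map_cfg_cylinder hq hi r hr s S, map_cfg_cylinder hq' hi' r hr' s S]

lemma prob_conn_shift (D : ZLat d → ℝ) (p : ℝ)
    (occ : Bond d → Ω → Prop)
    (hmeas : ∀ b : Bond d, MeasurableSet {ω | occ b ω})
    (hprob : ∀ (k : ℕ) (x y : ZLat d),
      P {ω | occ (k, x, y) ω} = ENNReal.ofReal (p * D (y - x)))
    (hindep : ProbabilityTheory.iIndepSet (fun b : Bond d => {ω | occ b ω}) P)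
    (m n : ℕ) (hmn : m ≤ n) (y x : ZLat d) :
    P {ω | Conn occ ω m y n x} = P {ω | Conn occ ω 0 0 (n - m) (x - y)} := by
  classical
  have hφinj : Function.Injective
      (fun b : Bond d => ((b.1 + m, b.2.1 + y, b.2.2 + y) : Bond d)) := by
    intro b b' hbb
    obtain ⟨k, u, v⟩ := b
    obtain ⟨k', u', v'⟩ := b'
    simp only [Prod.mk.injEq] at hbb ⊢
    refine ⟨by omega, ?_, ?_⟩
    · exact add_right_cancel hbb.2.1
    · exact add_right_cancel hbb.2.2
  have hq'meas : ∀ b : Bond d,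
      MeasurableSet {ω | (fun b : Bond d => occ (b.1 + m, b.2.1 + y, b.2.2 + y)) b ω} :=
    fun b => hmeas _
  have hi' : ProbabilityTheory.iIndepSet
      (fun b : Bond d =>
        {ω | (fun b : Bond d => occ (b.1 + m, b.2.1 + y, b.2.2 + y)) b ω}) P :=
    iIndepSet_precomp hindep _ hφinj
  have hr : ∀ b : Bond d,
      P {ω | occ b ω} = ENNReal.ofReal (p * D (b.2.2 - b.2.1)) :=
    fun b => hprob b.1 b.2.1 b.2.2
  have hr' : ∀ b : Bond d,
      P {ω | (fun b : Bond d => occ (b.1 + m, b.2.1 + y, b.2.2 + y)) b ω}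
        = ENNReal.ofReal (p * D (b.2.2 - b.2.1)) := by
    intro b
    have h := hprob (b.1 + m) (b.2.1 + y) (b.2.2 + y)
    rw [add_sub_add_right_eq_sub] at h
    exact h
  have hlaw : P.map (cfg occ)
      = P.map (cfg (fun b : Bond d => occ (b.1 + m, b.2.1 + y, b.2.2 + y))) :=
    map_cfg_eq hmeas hq'meas hindep hi' _ hr hr'
  have hS0 : MeasurableSet
      {c : Bond d → Bool |
        Conn (fun b (c : Bond d → Bool) => c b = true) c 0 0 (n - m) (x - y)} :=
    conn_measurable _ _ 0 0 (n - m) (x - y)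
      (fun b _ _ => by
        have hev : Measurable fun c : Bond d → Bool => c b := measurable_pi_apply b
        exact hev (measurableSet_singleton true))
  have h1 : {ω | Conn occ ω 0 0 (n - m) (x - y)} =
      cfg occ ⁻¹'
        {c : Bond d → Bool |
          Conn (fun b (c : Bond d → Bool) => c b = true) c 0 0 (n - m) (x - y)} := by
    ext ω
    simp only [Set.mem_setOf_eq, Set.mem_preimage]
    exact conn_congr (fun b => cfg_apply_true.symm) 0 0 (n - m) (x - y)
  have h2 : {ω | Conn occ ω m y n x} =
      cfg (fun b : Bond d => occ (b.1 + m, b.2.1 + y, b.2.2 + y)) ⁻¹'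
        {c : Bond d → Bool |
          Conn (fun b (c : Bond d → Bool) => c b = true) c 0 0 (n - m) (x - y)} := by
    ext ω
    simp only [Set.mem_setOf_eq, Set.mem_preimage]
    have e1 : Conn (fun b (c : Bond d → Bool) => c b = true)
        (cfg (fun b : Bond d => occ (b.1 + m, b.2.1 + y, b.2.2 + y)) ω) 0 0 (n - m) (x - y)
        ↔ Conn (fun b : Bond d => occ (b.1 + m, b.2.1 + y, b.2.2 + y)) ω 0 0 (n - m) (x - y) :=
      conn_congr (q := fun (b : Bond d) (c : Bond d → Bool) => c b = true)
        (q' := fun b : Bond d => occ (b.1 + m, b.2.1 + y, b.2.2 + y))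
        (ω := cfg (fun b : Bond d => occ (b.1 + m, b.2.1 + y, b.2.2 + y)) ω) (ω' := ω)
        (fun b => cfg_apply_true) 0 0 (n - m) (x - y)
    have e2 : Conn (fun b : Bond d => occ (b.1 + m, b.2.1 + y, b.2.2 + y)) ω 0 0 (n - m) (x - y)
        ↔ Conn occ ω m y n x := by
      have h := conn_shift (q := occ) (ω := ω) m y (n - m) (x - y)
      rw [Nat.sub_add_cancel hmn, sub_add_cancel] at h
      exact h
    exact (e1.trans e2).symm
  calc P {ω | Conn occ ω m y n x}
      = P (cfg (fun b : Bond d => occ (b.1 + m, b.2.1 + y, b.2.2 + y)) ⁻¹'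
          {c : Bond d → Bool |
            Conn (fun b (c : Bond d → Bool) => c b = true) c 0 0 (n - m) (x - y)}) := by
        rw [h2]
    _ = (P.map (cfg (fun b : Bond d => occ (b.1 + m, b.2.1 + y, b.2.2 + y))))
          {c : Bond d → Bool |
            Conn (fun b (c : Bond d → Bool) => c b = true) c 0 0 (n - m) (x - y)} :=
        (Measure.map_apply (cfg_measurable _ hq'meas) hS0).symm
    _ = (P.map (cfg occ))
          {c : Bond d → Bool |
            Conn (fun b (c : Bond d → Bool) => c b = true) c 0 0 (n - m) (x - y)} := by
        rw [hlaw]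
    _ = P (cfg occ ⁻¹'
          {c : Bond d → Bool |
            Conn (fun b (c : Bond d → Bool) => c b = true) c 0 0 (n - m) (x - y)}) :=
        Measure.map_apply (cfg_measurable _ hmeas) hS0
    _ = P {ω | Conn occ ω 0 0 (n - m) (x - y)} := by rw [h1]

end Aux

/-- Lemma `reductionOP`: for oriented percolation with independent
Bernoulli bonds of parameter `p·D(y−x)`, any `f : ℤ^d → [0,∞]` and `0 ≤ m < n`,
`E[Σ_{x∈T_n} Σ_{y∈T_m} 1((m,y)→(n,x))·f(x−y)] ≤ E[|T_m|]·Σ_z f(z)·P(z ∈ T_{n−m})`. -/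
theorem statement18 {d : ℕ} (hd : 1 ≤ d)
    {Ω : Type*} [MeasurableSpace Ω] (P : Measure Ω) [IsProbabilityMeasure P]
    (D : ZLat d → ℝ) (hD0 : ∀ x, 0 ≤ D x) (hD1 : HasSum D 1)
    (p : ℝ) (hp : 0 ≤ p) (hpD : ∀ x, p * D x ≤ 1)
    (occ : Bond d → Ω → Prop)
    (hmeas : ∀ b : Bond d, MeasurableSet {ω | occ b ω})
    (hprob : ∀ (k : ℕ) (x y : ZLat d),
      P {ω | occ (k, x, y) ω} = ENNReal.ofReal (p * D (y - x)))
    (hindep : ProbabilityTheory.iIndepSet (fun b : Bond d => {ω | occ b ω}) P)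
    (f : ZLat d → ℝ≥0∞) (m n : ℕ) (hmn : m < n) :
    ∫⁻ ω, (∑' x : ZLat d, ∑' y : ZLat d,
        if Conn occ ω 0 0 n x ∧ Conn occ ω 0 0 m y ∧ Conn occ ω m y n x
          then f (x - y) else 0) ∂P
      ≤ (∫⁻ ω, (∑' y : ZLat d, if Conn occ ω 0 0 m y then (1 : ℝ≥0∞) else 0) ∂P) *
        ∑' z : ZLat d, f z * P {ω | Conn occ ω 0 0 (n - m) z} := by
  classical
  have hconnMeas : ∀ (a : ℕ) (u : ZLat d) (b' : ℕ) (v : ZLat d),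
      MeasurableSet {ω | Conn occ ω a u b' v} := fun a u b' v =>
    conn_measurable _ occ a u b' v (fun b _ _ => hmeas b)
  have hind : ∀ (pr : Ω → Prop), MeasurableSet {ω | pr ω} → ∀ c : ℝ≥0∞,
      (∫⁻ ω, (if pr ω then c else 0) ∂P) = c * P {ω | pr ω} := by
    intro pr hs c
    rw [← lintegral_indicator_const hs c]
    refine lintegral_congr fun ω => ?_
    rw [Set.indicator_apply]
    simp only [Set.mem_setOf_eq]
  have hEF : ∀ y' x' : ZLat d,
      P {ω | Conn occ ω 0 0 m y' ∧ Conn occ ω m y' n x'}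
        = P {ω | Conn occ ω 0 0 m y'} * P {ω | Conn occ ω m y' n x'} := by
    intro y' x'
    have hd' : Disjoint {b : Bond d | b.1 < m} {b : Bond d | ¬ b.1 < m} := by
      rw [Set.disjoint_left]
      exact fun b hb hb' => hb' hb
    have hInd := ProbabilityTheory.iIndepSet.indep_generateFrom_of_disjoint hmeas hindep
      {b : Bond d | b.1 < m} {b : Bond d | ¬ b.1 < m} hd'
    have hmE : MeasurableSet[MeasurableSpace.generateFrom
        {t | ∃ b ∈ {b : Bond d | b.1 < m}, {ω | occ b ω} = t}] {ω | Conn occ ω 0 0 m y'} :=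
      conn_measurable _ occ 0 0 m y'
        (fun b _ hb => MeasurableSpace.measurableSet_generateFrom ⟨b, hb, rfl⟩)
    have hmF : MeasurableSet[MeasurableSpace.generateFrom
        {t | ∃ b ∈ {b : Bond d | ¬ b.1 < m}, {ω | occ b ω} = t}] {ω | Conn occ ω m y' n x'} :=
      conn_measurable _ occ m y' n x'
        (fun b hb _ => MeasurableSpace.measurableSet_generateFrom ⟨b, not_lt.mpr hb, rfl⟩)
    exact (ProbabilityTheory.Indep_iff _ _ _).1 hInd _ _ hmE hmF
  have hFQ : ∀ y' x' : ZLat d,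
      P {ω | Conn occ ω m y' n x'} = P {ω | Conn occ ω 0 0 (n - m) (x' - y')} :=
    fun y' x' => prob_conn_shift D p occ hmeas hprob hindep m n hmn.le y' x'
  have hRHS : ∫⁻ ω, (∑' y' : ZLat d, if Conn occ ω 0 0 m y' then (1 : ℝ≥0∞) else 0) ∂P
      = ∑' y' : ZLat d, P {ω | Conn occ ω 0 0 m y'} := by
    rw [lintegral_tsum (fun y' => (Measurable.ite (hconnMeas 0 0 m y')
      measurable_const measurable_const).aemeasurable)]
    exact tsum_congr fun y' => by rw [hind _ (hconnMeas 0 0 m y') 1, one_mul]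
  rw [hRHS]
  refine le_of_eq ?_
  calc ∫⁻ ω, (∑' x' : ZLat d, ∑' y' : ZLat d,
        if Conn occ ω 0 0 n x' ∧ Conn occ ω 0 0 m y' ∧ Conn occ ω m y' n x'
          then f (x' - y') else 0) ∂P
      = ∫⁻ ω, (∑' x' : ZLat d, ∑' y' : ZLat d,
        if Conn occ ω 0 0 m y' ∧ Conn occ ω m y' n x' then f (x' - y') else 0) ∂P := by
        refine lintegral_congr fun ω => tsum_congr fun x' => tsum_congr fun y' =>
          if_congr ⟨fun h => ⟨h.2.1, h.2.2⟩, fun h => ⟨conn_trans h.1 h.2, h.1, h.2⟩⟩ rfl rfl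
    _ = ∑' x' : ZLat d, ∫⁻ ω, (∑' y' : ZLat d,
        if Conn occ ω 0 0 m y' ∧ Conn occ ω m y' n x' then f (x' - y') else 0) ∂P :=
        lintegral_tsum fun x' => (Measurable.ennreal_tsum fun y' =>
          Measurable.ite ((hconnMeas 0 0 m y').inter (hconnMeas m y' n x'))
            measurable_const measurable_const).aemeasurable
    _ = ∑' x' : ZLat d, ∑' y' : ZLat d, ∫⁻ ω,
        (if Conn occ ω 0 0 m y' ∧ Conn occ ω m y' n x' then f (x' - y') else 0) ∂P :=
        tsum_congr fun x' => lintegral_tsum fun y' =>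
          (Measurable.ite ((hconnMeas 0 0 m y').inter (hconnMeas m y' n x'))
            measurable_const measurable_const).aemeasurable
    _ = ∑' x' : ZLat d, ∑' y' : ZLat d,
        f (x' - y') * P {ω | Conn occ ω 0 0 m y' ∧ Conn occ ω m y' n x'} :=
        by
        refine tsum_congr fun x' => tsum_congr fun y' => ?_
        have h := hind (fun ω => Conn occ ω 0 0 m y' ∧ Conn occ ω m y' n x')
          ((hconnMeas 0 0 m y').inter (hconnMeas m y' n x')) (f (x' - y'))
        convert h using 2
        funext ω
        congr
    _ = ∑' x' : ZLat d, ∑' y' : ZLat d, f (x' - y') *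
        (P {ω | Conn occ ω 0 0 m y'} * P {ω | Conn occ ω 0 0 (n - m) (x' - y')}) := by
        refine tsum_congr fun x' => tsum_congr fun y' => ?_
        rw [hEF y' x', hFQ y' x']
    _ = ∑' y' : ZLat d, ∑' x' : ZLat d, f (x' - y') *
        (P {ω | Conn occ ω 0 0 m y'} * P {ω | Conn occ ω 0 0 (n - m) (x' - y')}) :=
        ENNReal.tsum_comm
    _ = ∑' y' : ZLat d, P {ω | Conn occ ω 0 0 m y'} *
        ∑' z : ZLat d, f z * P {ω | Conn occ ω 0 0 (n - m) z} := by
        refine tsum_congr fun y' => ?_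
        calc ∑' x' : ZLat d, f (x' - y') *
              (P {ω | Conn occ ω 0 0 m y'} * P {ω | Conn occ ω 0 0 (n - m) (x' - y')})
            = ∑' x' : ZLat d, P {ω | Conn occ ω 0 0 m y'} *
              (f (x' - y') * P {ω | Conn occ ω 0 0 (n - m) (x' - y')}) :=
              tsum_congr fun x' => by ring
          _ = P {ω | Conn occ ω 0 0 m y'} *
              ∑' x' : ZLat d, f (x' - y') * P {ω | Conn occ ω 0 0 (n - m) (x' - y')} :=
              ENNReal.tsum_mul_left
          _ = P {ω | Conn occ ω 0 0 m y'} *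
              ∑' z : ZLat d, f z * P {ω | Conn occ ω 0 0 (n - m) z} := by
              congr 1
              have h := Equiv.tsum_eq (Equiv.subRight y')
                (fun z : ZLat d => f z * P {ω | Conn occ ω 0 0 (n - m) z})
              simpa using h
    _ = (∑' y' : ZLat d, P {ω | Conn occ ω 0 0 m y'}) *
        ∑' z : ZLat d, f z * P {ω | Conn occ ω 0 0 (n - m) z} :=
        ENNReal.tsum_mul_right

end OrientedPercolationPaper
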